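/- For the mean-field BEG model with target π(x) ∝ exp(−βR_N(x) + (Kβ/N)S_N(x)²) on X = {−1,0,1}^N and local Metropolis chain M_E with proposal K_E(x,·) that adds ±1 (mod 3, identified with {−1,0,1}) to a uniformly chosen coordinate: with A = {x : S_N(x) < 0}, one has π(A) ≤ 1/2 and Σ_{x∈A, y∈A^c} π(x)M_E(x,y) ≤ π{y : S_N(y) ∈ {0,1}}, hence the conductance satisfies h(π, M_E) ≤ 2π{y : S_N(y) ∈ {0,1}}/(1 − π{y : S_N(y) = 0}). -/

import Mathlib

open Finset

/-- Spin value of a BEG site, encoding `Fin 3 = {0,1,2}` as `{-1,0,1}`. -/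
def begSpin (t : Fin 3) : ℤ := (t : ℤ) - 1

/-- `S_N(x) = ∑ x_i`. -/
def begSN (N : ℕ) (x : Fin N → Fin 3) : ℤ := ∑ i, begSpin (x i)

/-- `R_N(x) = ∑ x_i²`. -/
def begRN (N : ℕ) (x : Fin N → Fin 3) : ℤ := ∑ i, (begSpin (x i)) ^ 2

/-- BEG Gibbs weight `exp(-β R_N(x) + (Kβ/N) S_N(x)²)`. -/
noncomputable def begW (N : ℕ) (β K : ℝ) (x : Fin N → Fin 3) : ℝ :=
  Real.exp (-β * (begRN N x : ℝ) + K * β / N * (begSN N x : ℝ) ^ 2)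

/-- The BEG Gibbs measure `π(x) = begW(x)/Z_N`. -/
noncomputable def begPi (N : ℕ) (β K : ℝ) (x : Fin N → Fin 3) : ℝ :=
  begW N β K x / ∑ y, begW N β K y

/-- The local proposal `K_E`: add `±1` (mod 3, i.e. with `2 = -1`, `-2 = 1`) to a
uniformly chosen coordinate. -/
noncomputable def begKE (N : ℕ) (x y : Fin N → Fin 3) : ℝ :=
  (1 / (2 * (N : ℝ))) * ∑ j,
    ((if y = Function.update x j (x j + 1) then (1 : ℝ) else 0) +
     (if y = Function.update x j (x j + 2) then (1 : ℝ) else 0))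

/-- The local Metropolis chain `M_E` for `π` with (symmetric) proposal `K_E`. -/
noncomputable def begME (N : ℕ) (β K : ℝ) (x y : Fin N → Fin 3) : ℝ :=
  if y = x then
    1 - ∑ z ∈ Finset.univ.erase x, begKE N x z * min 1 (begPi N β K z / begPi N β K x)
  else begKE N x y * min 1 (begPi N β K y / begPi N β K x)


/-! The spin flip `x ↦ -x` preserves `R_N` and `|S_N|`, so `π` is symmetric and
`π{S_N < 0} = π{S_N > 0} = (1 - π{S_N = 0}) / 2 ≤ 1/2`. A Metropolis step from `x` to `y ≠ x`
carries mass `π(x) M_E(x,y) ≤ K_E(x,y) π(y)`, and a single proposal changes one spin, hence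
`S_N` by at most `2`; so the flow out of `{S_N < 0}` only reaches states with `S_N ∈ {0, 1}`, each
receiving at most `π(y) ∑_x K_E(y,x) = π(y)`. Testing the conductance with `B = {S_N < 0}` gives
the bound. -/

section SpinFlip

/-- `t ↦ -t` under the encoding `begSpin`. -/
def flipSpin (t : Fin 3) : Fin 3 := 2 - t

lemma begSpin_flipSpin (t : Fin 3) : begSpin (flipSpin t) = -begSpin t := by
  fin_cases t <;> decide

lemma flipSpin_flipSpin (t : Fin 3) : flipSpin (flipSpin t) = t := by
  fin_cases t <;> decide

variable {N : ℕ} {β K : ℝ}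

lemma begSN_flipSpin (x : Fin N → Fin 3) : begSN N (flipSpin ∘ x) = -begSN N x := by
  simp [begSN, begSpin_flipSpin]

lemma begRN_flipSpin (x : Fin N → Fin 3) : begRN N (flipSpin ∘ x) = begRN N x := by
  simp [begRN, begSpin_flipSpin]

lemma begPi_flipSpin (x : Fin N → Fin 3) : begPi N β K (flipSpin ∘ x) = begPi N β K x := by
  simp only [begPi, begW, begSN_flipSpin, begRN_flipSpin, Int.cast_neg, neg_sq]

end SpinFlip

section GibbsMeasure

variable {N : ℕ} {β K : ℝ}

lemma begPi_pos (x : Fin N → Fin 3) : 0 < begPi N β K x :=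
  div_pos (Real.exp_pos _) (Finset.sum_pos (fun _ _ => Real.exp_pos _) univ_nonempty)

lemma sum_begPi : ∑ x, begPi N β K x = 1 := by
  simp only [begPi, ← Finset.sum_div]
  exact div_self (Finset.sum_pos (fun _ _ => Real.exp_pos _) univ_nonempty).ne'

lemma sum_begPi_begSN_neg :
    ∑ x with begSN N x < 0, begPi N β K x = ∑ x with 0 < begSN N x, begPi N β K x := by
  refine Finset.sum_nbij' (flipSpin ∘ ·) (flipSpin ∘ ·) ?_ ?_ ?_ ?_ ?_
  · intro x hx
    simp only [mem_filter, mem_univ, true_and, begSN_flipSpin] at hx ⊢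
    omega
  · intro x hx
    simp only [mem_filter, mem_univ, true_and, begSN_flipSpin] at hx ⊢
    omega
  all_goals intro x _
  · exact funext fun i => flipSpin_flipSpin (x i)
  · exact funext fun i => flipSpin_flipSpin (x i)
  · exact (begPi_flipSpin x).symm

lemma two_mul_sum_begPi_begSN_neg_add :
    2 * ∑ x with begSN N x < 0, begPi N β K x + ∑ x with begSN N x = 0, begPi N β K x
      = 1 := by
  have trichotomy : ∀ x : Fin N → Fin 3, begPi N β K x =
      (if begSN N x < 0 then begPi N β K x else 0) + (if begSN N x = 0 then begPi N β K x else 0)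
        + (if 0 < begSN N x then begPi N β K x else 0) := by
    intro x
    split_ifs <;> (try simp) <;> omega
  have total := sum_begPi (N := N) (β := β) (K := K)
  rw [Finset.sum_congr rfl fun x _ => trichotomy x, Finset.sum_add_distrib,
    Finset.sum_add_distrib, ← Finset.sum_filter, ← Finset.sum_filter, ← Finset.sum_filter,
    ← sum_begPi_begSN_neg] at total
  linarith

end GibbsMeasure

section Proposal

lemma eq_update_add_iff {ι G : Type*} [DecidableEq ι] [AddCommMonoid G] {x y : ι → G} {j : ι}
    {c d : G} (hcd : c + d = 0) :
    y = Function.update x j (x j + c) ↔ x = Function.update y j (y j + d) := by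
  have key : ∀ {x y : ι → G} {c d : G}, c + d = 0 →
      y = Function.update x j (x j + c) → x = Function.update y j (y j + d) := by
    rintro x y c d hcd rfl
    rw [Function.update_self, Function.update_idem, add_assoc, hcd, add_zero,
      Function.update_eq_self]
  exact ⟨key hcd, key (by rwa [add_comm])⟩

lemma abs_begSpin_le_one (t : Fin 3) : |begSpin t| ≤ 1 := by
  fin_cases t <;> decide

variable {N : ℕ}

lemma begSN_update (x : Fin N → Fin 3) (j : Fin N) (v : Fin 3) :
    begSN N (Function.update x j v) = begSN N x - begSpin (x j) + begSpin v := by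
  simp only [begSN, Function.apply_update (fun _ => begSpin),
    Finset.sum_update_of_mem (mem_univ j), ← Finset.add_sum_erase _ _ (mem_univ j),
    Finset.sdiff_singleton_eq_erase]
  ring

lemma begSN_const_zero (N : ℕ) : begSN N (fun _ => 0) = -N := by
  simp [begSN, begSpin]

lemma begKE_nonneg (x y : Fin N → Fin 3) : 0 ≤ begKE N x y := by
  unfold begKE
  positivity

lemma begKE_comm (x y : Fin N → Fin 3) : begKE N x y = begKE N y x := by
  unfold begKE
  congr 1
  refine Finset.sum_congr rfl fun j _ => ?_
  rw [if_congr (eq_update_add_iff (x := x) (y := y) (by decide : (1 : Fin 3) + 2 = 0)) rfl rfl,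
    if_congr (eq_update_add_iff (x := x) (y := y) (by decide : (2 : Fin 3) + 1 = 0)) rfl rfl,
    add_comm]

lemma sum_begKE (hN : 0 < N) (x : Fin N → Fin 3) : ∑ y, begKE N x y = 1 := by
  have two_moves : ∀ j : Fin N, ∑ y : Fin N → Fin 3,
      ((if y = Function.update x j (x j + 1) then (1 : ℝ) else 0) +
       (if y = Function.update x j (x j + 2) then (1 : ℝ) else 0)) = 2 := by
    intro j
    rw [Finset.sum_add_distrib, Finset.sum_ite_eq', Finset.sum_ite_eq']
    norm_num
  have hN' : (N : ℝ) ≠ 0 := by positivity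
  simp only [begKE, ← Finset.mul_sum]
  rw [Finset.sum_comm, Finset.sum_congr rfl fun j _ => two_moves j, Finset.sum_const,
    card_univ, Fintype.card_fin, nsmul_eq_mul]
  field_simp

lemma exists_eq_update_of_begKE_ne_zero {x y : Fin N → Fin 3} (h : begKE N x y ≠ 0) :
    ∃ j v, y = Function.update x j v := by
  obtain ⟨j, -, hj⟩ := Finset.exists_ne_zero_of_sum_ne_zero (right_ne_zero_of_mul h)
  by_cases h1 : y = Function.update x j (x j + 1)
  · exact ⟨j, _, h1⟩
  by_cases h2 : y = Function.update x j (x j + 2)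
  · exact ⟨j, _, h2⟩
  simp [h1, h2] at hj

lemma abs_begSN_sub_le_two_of_begKE_ne_zero {x y : Fin N → Fin 3} (h : begKE N x y ≠ 0) :
    |begSN N y - begSN N x| ≤ 2 := by
  obtain ⟨j, v, rfl⟩ := exists_eq_update_of_begKE_ne_zero h
  rw [begSN_update, add_comm_sub, add_sub_cancel_left]
  calc |begSpin v - begSpin (x j)| ≤ |begSpin v| + |begSpin (x j)| := abs_sub _ _
    _ ≤ 1 + 1 := add_le_add (abs_begSpin_le_one v) (abs_begSpin_le_one (x j))

lemma sum_begKE_le_one (hN : 0 < N) (s : Finset (Fin N → Fin 3)) (y : Fin N → Fin 3) :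
    ∑ x ∈ s, begKE N x y ≤ 1 :=
  calc ∑ x ∈ s, begKE N x y ≤ ∑ x, begKE N x y :=
        Finset.sum_le_sum_of_subset_of_nonneg (subset_univ s) fun x _ _ => begKE_nonneg x y
    _ = 1 := by simp_rw [begKE_comm _ y]; exact sum_begKE hN y

end Proposal

section Metropolis

variable {N : ℕ} {β K : ℝ}

lemma begPi_mul_begME_le {x y : Fin N → Fin 3} (hyx : y ≠ x) :
    begPi N β K x * begME N β K x y ≤ begKE N x y * begPi N β K y := by
  have hx := begPi_pos (β := β) (K := K) x
  rw [begME, if_neg hyx, mul_left_comm]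
  gcongr
  · exact begKE_nonneg x y
  calc begPi N β K x * min 1 (begPi N β K y / begPi N β K x)
      ≤ begPi N β K x * (begPi N β K y / begPi N β K x) := by gcongr; exact min_le_right _ _
    _ = begPi N β K y := mul_div_cancel₀ _ hx.ne'

lemma begME_nonneg_of_ne {x y : Fin N → Fin 3} (hyx : y ≠ x) : 0 ≤ begME N β K x y := by
  rw [begME, if_neg hyx]
  exact mul_nonneg (begKE_nonneg x y)
    (le_min zero_le_one (div_nonneg (begPi_pos y).le (begPi_pos x).le))

end Metropolis

section Flow

noncomputable def begFlow (N : ℕ) (β K : ℝ) (B : Finset (Fin N → Fin 3)) : ℝ :=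
  ∑ x ∈ B, ∑ y ∈ Bᶜ, begPi N β K x * begME N β K x y

variable {N : ℕ} {β K : ℝ}

lemma begFlow_nonneg (B : Finset (Fin N → Fin 3)) : 0 ≤ begFlow N β K B :=
  Finset.sum_nonneg fun x hx => Finset.sum_nonneg fun _ hy => mul_nonneg (begPi_pos x).le
    (begME_nonneg_of_ne (ne_of_mem_of_not_mem hx (mem_compl.mp hy)).symm)

lemma sum_begKE_begSN_neg_mul_le (hN : 0 < N) {y : Fin N → Fin 3} (hy : 0 ≤ begSN N y) :
    (∑ x with begSN N x < 0, begKE N x y) * begPi N β K y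
      ≤ if begSN N y = 0 ∨ begSN N y = 1 then begPi N β K y else 0 := by
  split_ifs with hy01
  · exact mul_le_of_le_one_left (begPi_pos y).le (sum_begKE_le_one hN _ y)
  · have no_move : ∀ x ∈ ({x | begSN N x < 0} : Finset _), begKE N x y = 0 := by
      intro x hx
      by_contra hK
      have := abs_le.mp (abs_begSN_sub_le_two_of_begKE_ne_zero hK)
      simp only [mem_filter, mem_univ, true_and] at hx
      omega
    rw [Finset.sum_eq_zero no_move, zero_mul]

lemma begFlow_begSN_neg_le (hN : 0 < N) :
    begFlow N β K {x | begSN N x < 0}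
      ≤ ∑ y with begSN N y = 0 ∨ begSN N y = 1, begPi N β K y := by
  set A : Finset (Fin N → Fin 3) := {x | begSN N x < 0} with hA
  calc begFlow N β K A
      ≤ ∑ x ∈ A, ∑ y ∈ Aᶜ, begKE N x y * begPi N β K y :=
        Finset.sum_le_sum fun x hx => Finset.sum_le_sum fun y hy =>
          begPi_mul_begME_le (ne_of_mem_of_not_mem hx (mem_compl.mp hy)).symm
    _ = ∑ y ∈ Aᶜ, (∑ x ∈ A, begKE N x y) * begPi N β K y := by
        rw [Finset.sum_comm]
        simp_rw [Finset.sum_mul]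
    _ ≤ ∑ y ∈ Aᶜ, if begSN N y = 0 ∨ begSN N y = 1 then begPi N β K y else 0 := by
        refine Finset.sum_le_sum fun y hy => sum_begKE_begSN_neg_mul_le hN ?_
        simpa [hA] using hy
    _ ≤ ∑ y, if begSN N y = 0 ∨ begSN N y = 1 then begPi N β K y else 0 :=
        Finset.sum_le_sum_of_subset_of_nonneg (subset_univ _) fun y _ _ =>
          ite_nonneg (begPi_pos y).le le_rfl
    _ = ∑ y with begSN N y = 0 ∨ begSN N y = 1, begPi N β K y := (Finset.sum_filter _ _).symm

end Flow

section Conductance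

noncomputable def begConductance (N : ℕ) (β K : ℝ) : ℝ :=
  sInf {v : ℝ | ∃ B : Finset (Fin N → Fin 3), B.Nonempty ∧
    ∑ x ∈ B, begPi N β K x ≤ 1 / 2 ∧ v = (1 / ∑ x ∈ B, begPi N β K x) * begFlow N β K B}

variable {N : ℕ} {β K : ℝ}

lemma begConductance_le {B : Finset (Fin N → Fin 3)} (hB : B.Nonempty)
    (hB_half : ∑ x ∈ B, begPi N β K x ≤ 1 / 2) :
    begConductance N β K ≤ (1 / ∑ x ∈ B, begPi N β K x) * begFlow N β K B := by
  refine csInf_le ⟨0, ?_⟩ ⟨B, hB, hB_half, rfl⟩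
  rintro v ⟨B', hB', -, rfl⟩
  have := Finset.sum_pos (fun x _ => begPi_pos (β := β) (K := K) x) hB'
  exact mul_nonneg (by positivity) (begFlow_nonneg B')

end Conductance

theorem beg_conductance_bound_general (N : ℕ) (hN : 0 < N)
    (β K : ℝ) :
    (∑ x ∈ Finset.univ.filter (fun x : Fin N → Fin 3 => begSN N x < 0),
        begPi N β K x) ≤ 1 / 2 ∧
    (∑ x ∈ Finset.univ.filter (fun x : Fin N → Fin 3 => begSN N x < 0),
        ∑ y ∈ (Finset.univ.filter (fun x : Fin N → Fin 3 => begSN N x < 0))ᶜ,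
          begPi N β K x * begME N β K x y)
      ≤ ∑ y ∈ Finset.univ.filter
          (fun y : Fin N → Fin 3 => begSN N y = 0 ∨ begSN N y = 1), begPi N β K y ∧
    sInf {v : ℝ | ∃ B : Finset (Fin N → Fin 3), B.Nonempty ∧
        (∑ x ∈ B, begPi N β K x) ≤ 1 / 2 ∧
        v = (1 / ∑ x ∈ B, begPi N β K x) *
          ∑ x ∈ B, ∑ y ∈ Bᶜ, begPi N β K x * begME N β K x y}
      ≤ 2 * (∑ y ∈ Finset.univ.filter
            (fun y : Fin N → Fin 3 => begSN N y = 0 ∨ begSN N y = 1), begPi N β K y) /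
          (1 - ∑ y ∈ Finset.univ.filter
            (fun y : Fin N → Fin 3 => begSN N y = 0), begPi N β K y) := by
  have partition := two_mul_sum_begPi_begSN_neg_add (N := N) (β := β) (K := K)
  have hA : ({x | begSN N x < 0} : Finset (Fin N → Fin 3)).Nonempty :=
    ⟨fun _ => 0, by simpa [begSN_const_zero] using hN⟩
  have hπA := Finset.sum_pos (fun x _ => begPi_pos (β := β) (K := K) x) hA
  have half : ∑ x with begSN N x < 0, begPi N β K x ≤ 1 / 2 := by
    linarith [Finset.sum_nonneg fun y (_ : y ∈ ({y | begSN N y = 0} : Finset _)) =>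
      (begPi_pos (β := β) (K := K) y).le]
  have flow := begFlow_begSN_neg_le (β := β) (K := K) hN
  refine ⟨half, flow, ?_⟩
  calc begConductance N β K
      ≤ (1 / ∑ x with begSN N x < 0, begPi N β K x) * begFlow N β K {x | begSN N x < 0} :=
        begConductance_le hA half
    _ ≤ (1 / ∑ x with begSN N x < 0, begPi N β K x) *
          ∑ y with begSN N y = 0 ∨ begSN N y = 1, begPi N β K y := by gcongr
    _ = _ := by
        rw [show 1 - ∑ y with begSN N y = 0, begPi N β K y
          = 2 * ∑ x with begSN N x < 0, begPi N β K x by linarith]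
        field_simp

/-- with `A = {x : S_N(x) < 0}` one has `π(A) ≤ 1/2`, the crossing
probability satisfies `∑_{x∈A, y∈Aᶜ} π(x) M_E(x,y) ≤ π{y : S_N(y) ∈ {0,1}}`, and hence
`h(π,M_E) ≤ 2 π{S_N ∈ {0,1}} / (1 - π{S_N = 0})`. -/
theorem beg_conductance_bound (N : ℕ) (hN : 0 < N) (hNe : Even N)
    (β K : ℝ) (hβ : 0 < β) (hK : 0 < K) :
    (∑ x ∈ Finset.univ.filter (fun x : Fin N → Fin 3 => begSN N x < 0),
        begPi N β K x) ≤ 1 / 2 ∧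
    (∑ x ∈ Finset.univ.filter (fun x : Fin N → Fin 3 => begSN N x < 0),
        ∑ y ∈ (Finset.univ.filter (fun x : Fin N → Fin 3 => begSN N x < 0))ᶜ,
          begPi N β K x * begME N β K x y)
      ≤ ∑ y ∈ Finset.univ.filter
          (fun y : Fin N → Fin 3 => begSN N y = 0 ∨ begSN N y = 1), begPi N β K y ∧
    sInf {v : ℝ | ∃ B : Finset (Fin N → Fin 3), B.Nonempty ∧
        (∑ x ∈ B, begPi N β K x) ≤ 1 / 2 ∧
        v = (1 / ∑ x ∈ B, begPi N β K x) *
          ∑ x ∈ B, ∑ y ∈ Bᶜ, begPi N β K x * begME N β K x y}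
      ≤ 2 * (∑ y ∈ Finset.univ.filter
            (fun y : Fin N → Fin 3 => begSN N y = 0 ∨ begSN N y = 1), begPi N β K y) /
          (1 - ∑ y ∈ Finset.univ.filter
            (fun y : Fin N → Fin 3 => begSN N y = 0), begPi N β K y) :=
  beg_conductance_bound_general N hN β K
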